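/- For every integer l ≥ 2, the subgroup of V(𝔽_pG) generated by p^l-th powers equals the group of normalized units over the subgroup G^{p^l}: V(𝔽_pG)^{p^l} = V(𝔽_p G^{p^l}). In particular, for every normalized unit α = Σ_{g∈G} α_g g one has α^{p^l} = Σ_{g∈G} α_g g^{p^l}. -/

import Mathlib

noncomputable section

open scoped commutatorElement

/-- The augmentation map `ε : 𝔽_pG → 𝔽_p` of the group algebra. -/
def aug (p : ℕ) (G : Type*) [Group G] :
    MonoidAlgebra (ZMod p) G →ₐ[ZMod p] ZMod p :=
  MonoidAlgebra.lift (ZMod p) (ZMod p) G 1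

/-- The group `V(𝔽_pG)` of normalized units, realized as the subgroup of the
unit group of the group algebra consisting of the units of augmentation `1`. -/
def normUnits (p : ℕ) (G : Type*) [Group G] :
    Subgroup (MonoidAlgebra (ZMod p) G)ˣ :=
  MonoidHom.ker (Units.map (aug p G).toRingHom.toMonoidHom)

/-- The image of `V(𝔽_pH)` inside the unit group of `𝔽_pG`, for a subgroup
`H ≤ G`. -/
def normUnitsOf (p : ℕ) {G : Type*} [Group G] (H : Subgroup G) :
    Subgroup (MonoidAlgebra (ZMod p) G)ˣ :=
  Subgroup.map
    (Units.map (MonoidAlgebra.mapDomainRingHom (ZMod p) H.subtype).toMonoidHom)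
    (normUnits p ↥H)

/-- `Ĉ_g`: the sum, in `𝔽_pG`, of the elements of the conjugacy class of `g`. -/
def classSum (p : ℕ) {G : Type*} [Group G] [Fintype G] (g : G) :
    MonoidAlgebra (ZMod p) G :=
  letI := Classical.decPred fun h : G => IsConj g h
  ∑ h ∈ Finset.univ.filter (fun h => IsConj g h), MonoidAlgebra.of (ZMod p) G h

/-- The subgroup `C` generated by the elements `1 + Ĉ_g`, for `g` ranging over
the noncentral elements of `G`. -/
def Csub (p : ℕ) (G : Type*) [Group G] [Fintype G] :
    Subgroup (MonoidAlgebra (ZMod p) G)ˣ :=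
  Subgroup.closure {u | ∃ g : G, g ∉ Subgroup.center G ∧
    (u : MonoidAlgebra (ZMod p) G) = 1 + classSum p g}

/-- The center of a subgroup `S`, realized as a subgroup of the ambient group. -/
def centerOf {W : Type*} [Group W] (S : Subgroup W) : Subgroup W :=
  Subgroup.centralizer (S : Set W) ⊓ S

/-- The subgroup `S^q` generated by the `q`-th powers of elements of `S`. -/
def powSub {W : Type*} [Group W] (S : Subgroup W) (q : ℕ) : Subgroup W :=
  Subgroup.closure {x | ∃ v ∈ S, x = v ^ q}

/-- `Ω_l(S)`: the subgroup generated by the elements `x ∈ S` with `x^{p^l} = 1`. -/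
def omegaSub {W : Type*} [Group W] (p l : ℕ) (S : Subgroup W) : Subgroup W :=
  Subgroup.closure {x | x ∈ S ∧ x ^ p ^ l = 1}

/-- The subgroup `G^q` of `G` generated by `q`-th powers. -/
def pthPowers (G : Type*) [Group G] (q : ℕ) : Subgroup G :=
  Subgroup.closure {x : G | ∃ g : G, x = g ^ q}

/-- `Ω(G, q)`: the subgroup of `G` generated by the elements `x` with `x^q = 1`. -/
def omegaGrp (G : Type*) [Group G] (q : ℕ) : Subgroup G :=
  Subgroup.closure {x : G | x ^ q = 1}

/-- `Δ(G,H)`: the (left) ideal of `𝔽_pG` generated by `{h - 1 : h ∈ H}`. -/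
def deltaIdeal (p : ℕ) (G : Type*) [Group G] (H : Subgroup G) :
    Ideal (MonoidAlgebra (ZMod p) G) :=
  Ideal.span {x | ∃ h ∈ H, x = MonoidAlgebra.of (ZMod p) G h - 1}

/-!
Since `G' = ⟨c⟩` is central of order `p`, the quotient of `𝔽_pG` by the ideal generated by
`c - 1` is commutative, so `α^p ≡ β := Σ α_g g^p` modulo `c - 1`. Every `g^p` is central, so `β`
is central, while `(c - 1)^p = c^p - 1 = 0` kills the `p`-th power of every element of that ideal;
hence `α^{p²} = β^p`, and `p`-th powers of centrally supported elements are computed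
coefficientwise. Finally `x ↦ x^{p^l}` is an endomorphism of `G` for `l ≥ 2`, because
`(xy)^n = x^n y^n [y,x]^(n choose 2)` and `p ∣ (p^l choose 2)`; so `α ↦ α^{p^l}` is the map induced
on `𝔽_pG` by this endomorphism, which carries `V(𝔽_pG)` onto `V(𝔽_p G^{p^l})`.
-/

open MonoidAlgebra

theorem MonoidAlgebra.mapDomain_mapDomain {R G H K : Type*} [Semiring R] (f : G → H) (g : H → K)
    (α : MonoidAlgebra R G) : mapDomain g (mapDomain f α) = mapDomain (g ∘ f) α := by
  ext; simp [Finsupp.mapDomain_comp]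

theorem MonoidAlgebra.mapDomain_eq_sum {R G H : Type*} [Semiring R] (f : G → H)
    (α : MonoidAlgebra R G) : mapDomain f α = α.coeff.sum fun g a ↦ single (f g) a := by
  conv_lhs => rw [← sum_coeff_single α, mapDomain_sum]
  simp only [mapDomain_single]

theorem MonoidAlgebra.mem_range_of_mem_support_mapDomain {R G H : Type*} [Semiring R]
    {f : G → H} {α : MonoidAlgebra R G} {h : H} (hh : h ∈ (mapDomain f α).coeff.support) :
    h ∈ Set.range f := by
  classical
  obtain ⟨g, -, rfl⟩ := Finset.mem_image.mp (Finsupp.mapDomain_support hh)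
  exact ⟨g, rfl⟩

section Frobenius

variable {p : ℕ} [Fact p.Prime] {S : Type*} [Ring S] [CharP S p]

theorem sum_pow_char_of_pairwise_commute {ι : Type*} (s : Finset ι) (x : ι → S)
    (hx : (s : Set ι).Pairwise fun i j ↦ Commute (x i) (x j)) :
    (∑ i ∈ s, x i) ^ p = ∑ i ∈ s, x i ^ p := by
  classical
  induction s using Finset.induction_on with
  | empty => simp [zero_pow (Fact.out : p.Prime).ne_zero]
  | insert i s hi ih =>
    rw [Finset.coe_insert, Set.pairwise_insert] at hx
    have hcomm : Commute (x i) (∑ j ∈ s, x j) :=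
      Commute.sum_right _ _ _ fun j hj ↦ (hx.2 j hj (ne_of_mem_of_not_mem hj hi).symm).1
    rw [Finset.sum_insert hi, Finset.sum_insert hi, add_pow_char_of_commute p hcomm, ih hx.1]

theorem MonoidAlgebra.sum_support_smul_of (G : Type*) [Monoid G] (α : MonoidAlgebra (ZMod p) G) :
    ∑ g ∈ α.coeff.support, α.coeff g • of (ZMod p) G g = α := by
  conv_rhs => rw [← sum_coeff_single α]
  simp [Finsupp.sum]

variable [Algebra (ZMod p) S]

theorem MonoidAlgebra.map_pow_char_of_pairwise_commute {G : Type*} [Monoid G]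
    (f : MonoidAlgebra (ZMod p) G →ₐ[ZMod p] S) (α : MonoidAlgebra (ZMod p) G)
    (hα : (α.coeff.support : Set G).Pairwise fun g h ↦ Commute (f (of _ G g)) (f (of _ G h))) :
    f α ^ p = f (mapDomain (· ^ p) α) := by
  have hα' : (α.coeff.support : Set G).Pairwise
      fun g h ↦ Commute (α.coeff g • f (of _ G g)) (α.coeff h • f (of _ G h)) :=
    hα.mono' fun g h hgh ↦ (hgh.smul_left _).smul_right _
  calc f α ^ p = (∑ g ∈ α.coeff.support, α.coeff g • f (of _ G g)) ^ p := by
        conv_lhs => rw [← sum_support_smul_of G α]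
        simp only [map_sum, map_smul]
    _ = ∑ g ∈ α.coeff.support, α.coeff g • f (of _ G (g ^ p)) := by
        rw [sum_pow_char_of_pairwise_commute _ _ hα']
        simp only [smul_pow, ZMod.pow_card, map_pow]
    _ = f (mapDomain (· ^ p) α) := by
        simp only [mapDomain_eq_sum, Finsupp.sum, map_sum, ← smul_of, map_smul]

instance MonoidAlgebra.charP_zmod (G : Type*) [Monoid G] :
    CharP (MonoidAlgebra (ZMod p) G) p :=
  charP_of_injective_algebraMap' (ZMod p) p

theorem MonoidAlgebra.commute_of_support_subset_center {G : Type*} [Monoid G]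
    {α : MonoidAlgebra (ZMod p) G} (hα : ∀ g ∈ α.coeff.support, g ∈ Set.center G)
    (β : MonoidAlgebra (ZMod p) G) : Commute α β := by
  rw [← sum_support_smul_of G α]
  exact Commute.sum_left _ _ _ fun g hg ↦
    (of_commute (fun h ↦ (Set.mem_center_iff.mp (hα g hg)).comm h) β).smul_left _

theorem MonoidAlgebra.pow_eq_mapDomain_of_support_subset_center {G : Type*} [Monoid G]
    {α : MonoidAlgebra (ZMod p) G} (hα : ∀ g ∈ α.coeff.support, g ∈ Set.center G) :
    α ^ p = mapDomain (· ^ p) α :=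
  map_pow_char_of_pairwise_commute (AlgHom.id (ZMod p) _) α fun g hg _ _ _ ↦
    of_commute (fun h ↦ (Set.mem_center_iff.mp (hα g hg)).comm h) _

end Frobenius

theorem Ideal.isTwoSided_span_singleton_of_commute {R : Type*} [Semiring R] {d : R}
    (hd : ∀ b, Commute d b) : (Ideal.span {d}).IsTwoSided := by
  refine ⟨fun b hx ↦ ?_⟩
  obtain ⟨a, rfl⟩ := Ideal.mem_span_singleton'.mp hx
  rw [mul_assoc, (hd b).eq, ← mul_assoc]
  exact Ideal.mul_mem_left _ _ (Ideal.mem_span_singleton_self d)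

theorem pow_eq_zero_of_mem_span_singleton {R : Type*} [Semiring R] {d x : R}
    (hd : ∀ b, Commute d b) {n : ℕ} (hdn : d ^ n = 0) (hx : x ∈ Ideal.span {d}) :
    x ^ n = 0 := by
  obtain ⟨a, rfl⟩ := Ideal.mem_span_singleton'.mp hx
  rw [((hd a).symm).mul_pow, hdn, mul_zero]

theorem MonoidHom.commute_of_commutator_le_ker {G M : Type*} [Group G] [Monoid M] (χ : G →* M)
    (hχ : commutator G ≤ χ.ker) (g h : G) : Commute (χ g) (χ h) := by
  have hgh : ⁅g, h⁆ ∈ χ.ker :=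
    hχ (Subgroup.commutator_mem_commutator (Subgroup.mem_top g) (Subgroup.mem_top h))
  calc χ g * χ h = χ ⁅g, h⁆ * χ (h * g) := by rw [← map_mul, ← map_mul]; group
    _ = χ h * χ g := by rw [hgh, one_mul, map_mul]

section GroupAlgebra

variable {p : ℕ} [Fact p.Prime] {G : Type*} [Group G] {c : G}

theorem MonoidAlgebra.commute_of_sub_one (hc : c ∈ Subgroup.center G)
    (β : MonoidAlgebra (ZMod p) G) : Commute (of (ZMod p) G c - 1) β :=
  (of_commute (fun g ↦ (Subgroup.mem_center_iff.mp hc g).symm) β).sub_left (Commute.one_left β)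

theorem MonoidAlgebra.pow_char_sub_mapDomain_mem_span (hc : c ∈ Subgroup.center G)
    (hG : commutator G ≤ Subgroup.zpowers c) (α : MonoidAlgebra (ZMod p) G) :
    α ^ p - mapDomain (· ^ p) α ∈ Ideal.span {of (ZMod p) G c - 1} := by
  set I := Ideal.span {of (ZMod p) G c - 1}
  have := Ideal.isTwoSided_span_singleton_of_commute (commute_of_sub_one (p := p) hc)
  rw [← Ideal.Quotient.eq]
  rcases subsingleton_or_nontrivial (MonoidAlgebra (ZMod p) G ⧸ I) with _ | _
  · exact Subsingleton.elim _ _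
  have : CharP (MonoidAlgebra (ZMod p) G ⧸ I) p := charP_of_injective_algebraMap' (ZMod p) p
  let χ : G →* MonoidAlgebra (ZMod p) G ⧸ I := (Ideal.Quotient.mk I).toMonoidHom.comp (of _ G)
  have hχ : commutator G ≤ χ.ker := hG.trans <| Subgroup.zpowers_le.mpr <|
    (Ideal.Quotient.eq.mpr (Ideal.mem_span_singleton_self _)).trans (map_one _)
  rw [map_pow]
  exact map_pow_char_of_pairwise_commute (Ideal.Quotient.mkₐ (ZMod p) I) α
    fun g _ h _ _ ↦ χ.commute_of_commutator_le_ker hχ g h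

theorem MonoidAlgebra.pow_char_sq_eq_mapDomain (hc : c ∈ Subgroup.center G) (hcp : c ^ p = 1)
    (hG : commutator G ≤ Subgroup.zpowers c) (hpow : ∀ g : G, g ^ p ∈ Subgroup.center G)
    (α : MonoidAlgebra (ZMod p) G) :
    α ^ p ^ 2 = mapDomain (· ^ p ^ 2) α := by
  set β := mapDomain (· ^ p) α
  have hβ : ∀ g ∈ β.coeff.support, g ∈ Subgroup.center G := fun g hg ↦ by
    obtain ⟨g', rfl⟩ := mem_range_of_mem_support_mapDomain hg
    exact hpow g'
  have hdp : (of (ZMod p) G c - 1) ^ p = 0 := by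
    rw [sub_pow_char_of_commute _ (Commute.one_right _), one_pow, ← map_pow, hcp, map_one,
      sub_self]
  have hw : (α ^ p - β) ^ p = 0 := pow_eq_zero_of_mem_span_singleton (commute_of_sub_one hc) hdp
    (pow_char_sub_mapDomain_mem_span hc hG α)
  calc α ^ p ^ 2 = (β + (α ^ p - β)) ^ p := by rw [add_sub_cancel, ← pow_mul, sq]
    _ = β ^ p := by
        rw [add_pow_char_of_commute _ (commute_of_support_subset_center hβ _), hw, add_zero]
    _ = mapDomain (· ^ p ^ 2) α := by
        rw [pow_eq_mapDomain_of_support_subset_center hβ, mapDomain_mapDomain]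
        simp only [Function.comp_def, ← pow_mul, sq]

theorem MonoidAlgebra.pow_char_pow_eq_mapDomain (hc : c ∈ Subgroup.center G) (hcp : c ^ p = 1)
    (hG : commutator G ≤ Subgroup.zpowers c) (hpow : ∀ g : G, g ^ p ∈ Subgroup.center G)
    {l : ℕ} (hl : 2 ≤ l) (α : MonoidAlgebra (ZMod p) G) :
    α ^ p ^ l = mapDomain (· ^ p ^ l) α := by
  induction l, hl using Nat.le_induction with
  | base => exact pow_char_sq_eq_mapDomain hc hcp hG hpow α
  | succ l hl ih =>
    have hcentral : ∀ g ∈ (mapDomain (· ^ p ^ l) α).coeff.support, g ∈ Set.center G := by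
      intro g hg
      obtain ⟨g', rfl⟩ := mem_range_of_mem_support_mapDomain hg
      obtain ⟨k, rfl⟩ := Nat.exists_eq_add_of_lt hl
      simp only [pow_succ, pow_mul]
      exact hpow _
    rw [pow_succ, pow_mul, ih, pow_eq_mapDomain_of_support_subset_center hcentral,
      mapDomain_mapDomain]
    simp only [Function.comp_def, ← pow_mul]

end GroupAlgebra

section CentralCommutators

variable {G : Type*} [Group G] {x y z : G}

theorem pow_mul_eq_pow_mul_mul_pow (hzy : Commute z y) (hyx : y * x = z * x * y) (n : ℕ) :
    y ^ n * x = z ^ n * x * y ^ n := by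
  induction n with
  | zero => simp
  | succ n ih =>
    calc y ^ (n + 1) * x = y * z ^ n * x * y ^ n := by rw [pow_succ', mul_assoc, ih]; group
      _ = z ^ n * (y * x) * y ^ n := by rw [← (hzy.pow_left n).eq]; group
      _ = z ^ (n + 1) * x * y ^ (n + 1) := by rw [hyx]; group

theorem mul_pow_eq_pow_mul_pow_mul_pow_choose (hzx : Commute z x) (hzy : Commute z y)
    (hyx : y * x = z * x * y) (n : ℕ) : (x * y) ^ n = x ^ n * y ^ n * z ^ n.choose 2 := by
  induction n with
  | zero => simp
  | succ n ih =>
    have hz : ∀ k a b, Commute (z ^ k) (x ^ a * y ^ b) := fun k a b ↦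
      ((hzx.pow_right a).mul_right (hzy.pow_right b)).pow_left k
    calc (x * y) ^ (n + 1) = x ^ n * y ^ n * (z ^ n.choose 2 * (x ^ 1 * y ^ 1)) := by
          rw [pow_succ, ih]; group
      _ = x ^ n * (y ^ n * x) * y * z ^ n.choose 2 := by rw [(hz _ 1 1).eq]; group
      _ = x ^ n * z ^ n * x * y ^ (n + 1) * z ^ n.choose 2 := by
          rw [pow_mul_eq_pow_mul_mul_pow hzy hyx]; group
      _ = z ^ n * (x ^ (n + 1) * y ^ (n + 1)) * z ^ n.choose 2 := by
          rw [← ((hzx.pow_right n).pow_left n).eq]; group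
      _ = x ^ (n + 1) * y ^ (n + 1) * z ^ (n + 1).choose 2 := by
          rw [(hz _ _ _).eq, Nat.choose_succ_succ, Nat.choose_one_right]; group

theorem mul_pow_prime_pow_of_commutator_mem_center {p : ℕ} (hp : p.Prime)
    (hcentral : ∀ x y : G, ⁅x, y⁆ ∈ Subgroup.center G) (hexp : ∀ x y : G, ⁅x, y⁆ ^ p = 1)
    {l : ℕ} (hl : 2 ≤ l) (x y : G) : (x * y) ^ p ^ l = x ^ p ^ l * y ^ p ^ l := by
  have hz : ∀ w, Commute ⁅y, x⁆ w := fun w ↦ (Subgroup.mem_center_iff.mp (hcentral y x) w).symm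
  have h2 : 2 ≠ p ^ l := by
    have : 2 ^ 2 ≤ p ^ l := (Nat.pow_le_pow_left hp.two_le 2).trans (Nat.pow_le_pow_right hp.pos hl)
    omega
  obtain ⟨k, hk⟩ := hp.dvd_choose_pow two_ne_zero h2
  rw [mul_pow_eq_pow_mul_pow_mul_pow_choose (hz x) (hz y) (by rw [commutatorElement_def]; group),
    hk, pow_mul, hexp, one_pow, mul_one]

end CentralCommutators

section NormalizedUnits

variable {p : ℕ} {G : Type*} [Group G]

theorem mem_normUnits_iff {u : (MonoidAlgebra (ZMod p) G)ˣ} :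
    u ∈ normUnits p G ↔ aug p G u = 1 := by
  rw [normUnits, MonoidHom.mem_ker, Units.ext_iff]
  rfl

theorem aug_mapDomain {H : Type*} [Group H] (f : G → H) (α : MonoidAlgebra (ZMod p) G) :
    aug p H (mapDomain f α) = aug p G α := by
  induction α using MonoidAlgebra.induction_linear with
  | zero => simp
  | add α β hα hβ => rw [mapDomain_add, map_add, map_add, hα, hβ]
  | single g a => simp [aug]

theorem pthPowers_eq_range {q : ℕ} (hmul : ∀ x y : G, (x * y) ^ q = x ^ q * y ^ q) :
    pthPowers G q = (MonoidHom.mk' (· ^ q) hmul).range := by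
  rw [pthPowers, ← Subgroup.closure_eq (MonoidHom.mk' (· ^ q) hmul).range]
  congr 1
  ext x
  simp [eq_comm]

theorem powSub_normUnits_eq_normUnitsOf_range {q : ℕ} (hq : q ≠ 0) (φ : G →* G)
    (hφ : ∀ α : MonoidAlgebra (ZMod p) G, α ^ q = mapDomain φ α) :
    powSub (normUnits p G) q = normUnitsOf p φ.range := by
  apply le_antisymm
  · rw [powSub, Subgroup.closure_le]
    rintro _ ⟨v, hv, rfl⟩
    refine ⟨Units.map (mapDomainRingHom (ZMod p) φ.rangeRestrict).toMonoidHom v, ?_, ?_⟩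
    · exact mem_normUnits_iff.mpr ((aug_mapDomain _ _).trans (mem_normUnits_iff.mp hv))
    · ext1
      rw [Units.val_pow_eq_pow_val, hφ]
      exact mapDomain_mapDomain _ _ _
  · rintro _ ⟨w, hw, rfl⟩
    choose s hs using fun h : φ.range ↦ h.2
    set u := Units.map (mapDomainRingHom (ZMod p) φ.range.subtype).toMonoidHom w
    have hα : mapDomain s (w : MonoidAlgebra (ZMod p) φ.range) ^ q = u := by
      simp [u, hφ, mapDomain_mapDomain, Function.comp_def, hs]
    obtain ⟨a, ha⟩ := (isUnit_pow_iff hq).mp (hα ▸ u.isUnit)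
    refine Subgroup.subset_closure ⟨a, mem_normUnits_iff.mpr ?_, Units.ext ?_⟩
    · rw [ha, aug_mapDomain]
      exact mem_normUnits_iff.mp hw
    · rw [Units.val_pow_eq_pow_val, ha, hα]

end NormalizedUnits

theorem stmt_16_general {p : ℕ} [Fact p.Prime]
    {G : Type*} [Group G]
    (N : Subgroup G) (hNZ : N ≤ Subgroup.center G)
    (hpow : ∀ x : G, x ^ p ∈ N) (hcomm : ∀ x y : G, ⁅x, y⁆ ∈ N)
    (c : G) (hc : commutator G = Subgroup.zpowers c) (hcp : orderOf c = p) :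
    ∀ l : ℕ, 2 ≤ l →
      powSub (normUnits p G) (p ^ l) = normUnitsOf p (pthPowers G (p ^ l)) ∧
      ∀ u ∈ normUnits p G,
        (u : MonoidAlgebra (ZMod p) G) ^ p ^ l =
          Finsupp.sum (u : MonoidAlgebra (ZMod p) G).coeff
            (fun g a => MonoidAlgebra.single (g ^ p ^ l) a) := by
  intro l hl
  have hp : p.Prime := Fact.out
  have hcZ : c ∈ Subgroup.center G :=
    hNZ <| Subgroup.commutator_le.mpr (fun x _ y _ ↦ hcomm x y) (hc ▸ Subgroup.mem_zpowers c)
  have hexp : ∀ x y : G, ⁅x, y⁆ ^ p = 1 := fun x y ↦ orderOf_dvd_iff_pow_eq_one.mp <|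
    hcp ▸ orderOf_dvd_of_mem_zpowers (hc ▸ Subgroup.commutator_mem_commutator
      (Subgroup.mem_top x) (Subgroup.mem_top y))
  have hpow_alg : ∀ α : MonoidAlgebra (ZMod p) G, α ^ p ^ l = mapDomain (· ^ p ^ l) α :=
    pow_char_pow_eq_mapDomain hcZ (hcp ▸ pow_orderOf_eq_one c) hc.le (fun g ↦ hNZ (hpow g)) hl
  have hmul := mul_pow_prime_pow_of_commutator_mem_center hp (fun x y ↦ hNZ (hcomm x y)) hexp hl
  refine ⟨?_, fun u _ ↦ ?_⟩
  · rw [pthPowers_eq_range hmul]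
    exact powSub_normUnits_eq_normUnitsOf_range (pow_ne_zero _ hp.ne_zero) _ hpow_alg
  · rw [hpow_alg, mapDomain_eq_sum]

/-- for `l ≥ 2`, `V(𝔽_pG)^{p^l} = V(𝔽_p G^{p^l})`; in particular
`α^{p^l} = Σ α_g g^{p^l}` for every normalized unit `α = Σ α_g g`. -/
theorem stmt_16 {p n m : ℕ} [Fact p.Prime] (hp : Odd p) (hm : 1 ≤ m) (hmn : m ≤ n)
    {G : Type*} [Group G] [Fintype G] (hpG : IsPGroup p G)
    (N : Subgroup G) (hNZ : N ≤ Subgroup.center G)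
    (hNiso : Nonempty (↥N ≃* Multiplicative (ZMod (p ^ n)) × Multiplicative (ZMod (p ^ m))))
    (hpow : ∀ x : G, x ^ p ∈ N) (hcomm : ∀ x y : G, ⁅x, y⁆ ∈ N)
    (c : G) (hc : commutator G = Subgroup.zpowers c) (hcp : orderOf c = p) :
    ∀ l : ℕ, 2 ≤ l →
      powSub (normUnits p G) (p ^ l) = normUnitsOf p (pthPowers G (p ^ l)) ∧
      ∀ u ∈ normUnits p G,
        (u : MonoidAlgebra (ZMod p) G) ^ p ^ l =
          Finsupp.sum (u : MonoidAlgebra (ZMod p) G).coeff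
            (fun g a => MonoidAlgebra.single (g ^ p ^ l) a) :=
  stmt_16_general N hNZ hpow hcomm c hc hcp

end
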